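/- Let R be a commutative ring, I, J ⊆ R ideals, with J = (f) principal generated by a nonzerodivisor f of R. Then the natural map I ⊗_R (R/J) → R/J is injective if and only if multiplication by f on R/I is injective. -/

import Mathlib

open TensorProduct

/- Up to the identifications `I ⊗ R/J ≅ R/J ⊗ I` and `R/J ⊗ R ≅ R/J`, the map `I ⊗ R/J → R/J` is
`R/J ⊗ (I ↪ R)`, whose kernel is `(J ∩ I)/JI`. For `J = (f)` with `f` a nonzerodivisor, an element
`f x` of `(f) ∩ I` lies in `fI` exactly when `x ∈ I`, so `(f) ∩ I = fI` says that `f` is regular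
on `R/I`. -/

section

variable {R : Type*} [CommRing R]

theorem injective_lift_lsmul_comp_subtype_iff_inf_eq_mul (I J : Ideal R) :
    Function.Injective
        (lift ((LinearMap.lsmul R (R ⧸ J)).comp I.subtype) : I ⊗[R] (R ⧸ J) →ₗ[R] R ⧸ J) ↔
      J ⊓ I = J * I := by
  have hfactor : lift ((LinearMap.lsmul R (R ⧸ J)).comp I.subtype) =
      (TensorProduct.rid R (R ⧸ J)).toLinearMap ∘ₗ I.subtype.lTensor (R ⧸ J) ∘ₗ
        (TensorProduct.comm R I (R ⧸ J)).toLinearMap := by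
    ext
    simp
  rw [hfactor, ← injective_lTensor_quotient_iff_inf_eq_mul]
  simp

theorem Ideal.span_singleton_inf_eq_mul_iff_isSMulRegular_quotient {f : R}
    (hf : f ∈ nonZeroDivisors R) (I : Ideal R) :
    Ideal.span {f} ⊓ I = Ideal.span {f} * I ↔ IsSMulRegular (R ⧸ I) f := by
  rw [isSMulRegular_quotient_iff_mem_of_smul_mem, le_antisymm_iff,
    and_iff_left Ideal.mul_le_inf]
  constructor
  · intro hle x hfx
    obtain ⟨y, hyI, hfy⟩ := Ideal.mem_span_singleton_mul.mp
      (hle ⟨Ideal.mem_span_singleton_self f |> Ideal.mul_mem_right x _, hfx⟩)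
    rwa [← (mul_cancel_left_mem_nonZeroDivisors hf).mp hfy]
  · rintro hreg y ⟨hyf, hyI⟩
    obtain ⟨x, rfl⟩ := Ideal.mem_span_singleton'.mp hyf
    rw [mul_comm] at hyI
    exact Ideal.mem_span_singleton_mul.mpr ⟨x, hreg x hyI, mul_comm f x⟩

end

/-- For ideals `I, J ⊆ R` with `J = (f)` generated by a nonzerodivisor `f`,
the natural map `I ⊗_R (R/J) → R/J` (induced by the inclusion `I ⊆ R` and the module
action) is injective iff multiplication by `f` on `R/I` is injective. -/
theorem stmt9 (R : Type*) [CommRing R] (I J : Ideal R) (f : R)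
    (hf : f ∈ nonZeroDivisors R) (hJ : J = Ideal.span {f}) :
    Function.Injective
      (TensorProduct.lift ((LinearMap.lsmul R (R ⧸ J)).comp I.subtype) :
        I ⊗[R] (R ⧸ J) →ₗ[R] R ⧸ J) ↔
      Function.Injective (fun x : R ⧸ I => f • x) := by
  subst hJ
  rw [injective_lift_lsmul_comp_subtype_iff_inf_eq_mul,
    Ideal.span_singleton_inf_eq_mul_iff_isSMulRegular_quotient hf]
  rfl
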